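/- arXiv:2603.04060 — 5 statements merged into one kernel-verified Lean document; each statement's English description precedes it below -/
import Mathlib

section
/- Let R be a commutative ring. Then fPD(R) ≤ FP-id_R(R), i.e., the small finitistic dimension of R is at most the self-FP-injective dimension of R. -/
universe u

open CategoryTheory Opposite

/-- `extMod R A B i` is the Ext module `Ext_R^i(A, B)` of the `R`-modules `A` and `B`. -/
noncomputable abbrev extMod (R : Type u) [CommRing R] (A B : Type u)
    [AddCommGroup A] [Module R A] [AddCommGroup B] [Module R B] (i : ℕ) : ModuleCat R :=
  ((Ext R (ModuleCat.{u} R) i).obj (op (ModuleCat.of R A))).obj (ModuleCat.of R B)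

/-- `HasFGProjRes R d M` : there is an exact sequence `0 → P_d → ⋯ → P_0 → M → 0`
with each `P_i` finitely generated projective (a finite projective resolution of length `d`). -/
def HasFGProjRes (R : Type u) [CommRing R] :
    ℕ → (M : Type u) → [AddCommGroup M] → [Module R M] → Prop
  | 0, M, _, _ => Module.Finite R M ∧ Module.Projective R M
  | d + 1, M, _, _ => ∃ (P : Type u) (_ : AddCommGroup P) (_ : Module R P) (f : P →ₗ[R] M),
      Module.Finite R P ∧ Module.Projective R P ∧ Function.Surjective f ∧
      HasFGProjRes R d (LinearMap.ker f)

/-- The small finitistic dimension of `R` is at most `d`: every module admitting a finite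
projective resolution (by finitely generated projectives) has projective dimension `≤ d`,
i.e. admits such a resolution of length `≤ d`. -/
def fPDle (R : Type u) [CommRing R] (d : ℕ) : Prop :=
  ∀ (M : Type u) [AddCommGroup M] [Module R M],
    (∃ m : ℕ, HasFGProjRes R m M) → ∃ k ≤ d, HasFGProjRes R k M

/-- The self-FP-injective dimension of `R` is at most `d`: for some `m ≤ d`,
`Ext_R^{m+1}(N, R) = 0` for every finitely presented `R`-module `N`. -/
def FPInjDimLE (R : Type u) [CommRing R] (d : ℕ) : Prop :=
  ∃ m ≤ d, ∀ (N : Type u) [AddCommGroup N] [Module R N],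
    Module.FinitePresentation R N → Subsingleton (extMod R N R (m + 1))

/-!
Dimension shifting along a resolution by finitely generated projectives turns the vanishing of
`Ext^{m+1}(-, R)` on finitely presented modules into `Ext^j(M, R) = 0` for all `j > m`, whenever
`M` has such a resolution. If the resolution `0 → P_n → ⋯ → P_0 → M → 0` is longer than `d ≥ m`,
then `Ext^n(M, P_n) = 0` as well, `P_n` being a direct summand of some `Rᵏ`. Shifting once more,
`Ext^1(Ω^{n-1}M, P_n) = 0`, so `0 → P_n → P_{n-1} → Ω^{n-1}M → 0` splits and the resolution
can be shortened by one.
-/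

open CategoryTheory Limits

namespace CategoryTheory.Abelian.Ext

variable {C : Type*} [Category C] [Abelian C] [HasExt C]

theorem subsingleton_of_retract {X Y Y' : C} (h : Retract Y Y') {n : ℕ}
    [Subsingleton (Ext X Y' n)] : Subsingleton (Ext X Y n) :=
  have hinj : Function.Injective fun e : Ext X Y n => e.comp (mk₀ h.i) (add_zero n) :=
    Function.LeftInverse.injective (g := fun e => e.comp (mk₀ h.r) (add_zero n)) fun e => by
      simp only [comp_assoc_of_third_deg_zero, mk₀_comp_mk₀, h.retract, comp_mk₀_id]
  hinj.subsingleton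

theorem subsingleton_biproduct {J : Type*} [Fintype J] (X : C) (Y : J → C) [HasBiproduct Y]
    (n : ℕ) [∀ j, Subsingleton (Ext X (Y j) n)] : Subsingleton (Ext X (⨁ Y) n) :=
  (addEquivBiproduct X (biproduct.isBilimit Y) n).injective.subsingleton

end CategoryTheory.Abelian.Ext

namespace CategoryTheory.ShortComplex.ShortExact

variable {C : Type*} [Category C] [Abelian C] [HasExt C] {S : ShortComplex C}
  (hS : S.ShortExact)
include hS

theorem subsingleton_ext_add_two_iff [Projective S.X₂] (Y : C) (n : ℕ) :
    Subsingleton (Abelian.Ext S.X₃ Y (n + 2)) ↔ Subsingleton (Abelian.Ext S.X₁ Y (n + 1)) := by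
  refine ⟨fun _ => subsingleton_of_forall_eq 0 fun x₁ => ?_,
    fun _ => subsingleton_of_forall_eq 0 fun x₃ => ?_⟩
  · obtain ⟨x₂, rfl⟩ := Abelian.Ext.contravariant_sequence_exact₁ hS Y x₁ (add_comm 1 (n + 1))
      (Subsingleton.elim _ _)
    rw [x₂.eq_zero_of_projective, Abelian.Ext.comp_zero]
  · obtain ⟨x₁, rfl⟩ := Abelian.Ext.contravariant_sequence_exact₃ hS Y x₃
      (Abelian.Ext.eq_zero_of_projective _) (add_comm 1 (n + 1))
    rw [Subsingleton.elim x₁ 0, Abelian.Ext.comp_zero]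

theorem projective_X₃ [Projective S.X₂] [Subsingleton (Abelian.Ext S.X₃ S.X₁ 1)] :
    Projective S.X₃ := by
  obtain ⟨x₂, hx₂⟩ := Abelian.Ext.contravariant_sequence_exact₁ hS S.X₁
    (Abelian.Ext.mk₀ (𝟙 S.X₁)) (add_zero 1) (Subsingleton.elim _ _)
  obtain ⟨r, rfl⟩ := Abelian.Ext.homEquiv₀.symm.surjective x₂
  have hr : S.f ≫ r = 𝟙 S.X₁ := Abelian.Ext.homEquiv₀.symm.injective (by simpa using hx₂)
  let σ := Splitting.ofExactOfRetraction S hS.exact r hr hS.epi_g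
  exact Retract.projective ⟨σ.s, S.g, σ.s_g⟩

end CategoryTheory.ShortComplex.ShortExact

section

variable {R : Type u} [CommRing R]

namespace CategoryTheory.ProjectiveResolution

variable {X : ModuleCat.{u} R} (P : ProjectiveResolution X) (j : ℕ) (Y : ModuleCat.{u} R)

theorem subsingleton_ext_succ_iff :
    Subsingleton (((Ext R (ModuleCat.{u} R) (j + 1)).obj (op X)).obj Y) ↔
      ∀ f : P.complex.X (j + 1) ⟶ Y, P.complex.d (j + 2) (j + 1) ≫ f = 0 →
        ∃ g : P.complex.X j ⟶ Y, P.complex.d (j + 1) j ≫ g = f := by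
  rw [(P.isoExt (j + 1) Y).toLinearEquiv.toEquiv.subsingleton_congr,
    ← ModuleCat.isZero_iff_subsingleton, ← HomologicalComplex.exactAt_iff_isZero_homology,
    HomologicalComplex.exactAt_iff' _ j (j + 1) (j + 2) (by simp) (by simp),
    ShortComplex.moduleCat_exact_iff]
  rfl

theorem subsingleton_abelianExt_succ_iff :
    Subsingleton (Abelian.Ext X Y (j + 1)) ↔
      ∀ f : P.complex.X (j + 1) ⟶ Y, P.complex.d (j + 2) (j + 1) ≫ f = 0 →
        ∃ g : P.complex.X j ⟶ Y, P.complex.d (j + 1) j ≫ g = f := by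
  refine ⟨fun _ f hf => (P.extMk_eq_zero_iff f _ rfl hf j rfl).1 (Subsingleton.elim _ _),
    fun h => subsingleton_of_forall_eq 0 fun x => ?_⟩
  obtain ⟨f, hf, rfl⟩ := P.extMk_surjective x (j + 2) rfl
  exact (P.extMk_eq_zero_iff f _ rfl hf j rfl).2 (h f hf)

end CategoryTheory.ProjectiveResolution

namespace ModuleCat

-- Mathlib's long exact sequences are stated for `Abelian.Ext`, hence this transfer.
theorem subsingleton_ext_succ_iff_abelianExt (X Y : ModuleCat.{u} R) (j : ℕ) :
    Subsingleton (((Ext R (ModuleCat.{u} R) (j + 1)).obj (op X)).obj Y) ↔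
      Subsingleton (Abelian.Ext X Y (j + 1)) := by
  rw [(ProjectiveResolution.of X).subsingleton_ext_succ_iff,
    (ProjectiveResolution.of X).subsingleton_abelianExt_succ_iff]

theorem subsingleton_ext_of_finite_of_projective (X : ModuleCat.{u} R) (n : ℕ)
    [Subsingleton (Abelian.Ext X (of R R) n)]
    (K : Type u) [AddCommGroup K] [Module R K] [Module.Finite R K] [Module.Projective R K] :
    Subsingleton (Abelian.Ext X (of R K) n) := by
  obtain ⟨k, f, g, -, -, hfg⟩ := Module.Finite.exists_comp_eq_id_of_projective R K
  have hK : Retract (of R K) (⨁ fun _ : Fin k => of R R) :=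
    Retract.trans ⟨ofHom g, ofHom f, by ext x; exact congr($hfg x)⟩
      (biproductIsoPi fun _ : Fin k => of R R).symm.retract
  have := Abelian.Ext.subsingleton_biproduct X (fun _ : Fin k => of R R) n
  exact Abelian.Ext.subsingleton_of_retract hK

end ModuleCat

namespace HasFGProjRes

theorem finite : ∀ {n : ℕ} {M : Type u} [AddCommGroup M] [Module R M],
    HasFGProjRes R n M → Module.Finite R M
  | 0, _, _, _, h => h.1
  | _ + 1, _, _, _, ⟨_, _, _, _, _, _, hf, _⟩ => Module.Finite.of_surjective _ hf

theorem finitePresentation : ∀ {n : ℕ} {M : Type u} [AddCommGroup M] [Module R M],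
    HasFGProjRes R n M → Module.FinitePresentation R M
  | 0, M, _, _, ⟨_, _⟩ => Module.finitePresentation_of_projective R M
  | _ + 1, _, _, _, ⟨P, _, _, f, _, _, hf, hK⟩ =>
    have : Module.FinitePresentation R P := Module.finitePresentation_of_projective R P
    Module.finitePresentation_of_surjective f hf (Module.Finite.iff_fg.1 hK.finite)

theorem subsingleton_ext_add {m : ℕ} {Y : ModuleCat.{u} R}
    (hY : ∀ (N : Type u) [AddCommGroup N] [Module R N], Module.FinitePresentation R N →
      Subsingleton (Abelian.Ext (ModuleCat.of R N) Y (m + 1))) :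
    ∀ (t : ℕ) {n : ℕ} {M : Type u} [AddCommGroup M] [Module R M], HasFGProjRes R n M →
      Subsingleton (Abelian.Ext (ModuleCat.of R M) Y (m + t + 1))
  | 0, _, M, _, _, hM => hY M hM.finitePresentation
  | _ + 1, 0, _, _, _, ⟨_, _⟩ => Abelian.Ext.subsingleton_of_projective _ _ _
  | t + 1, _ + 1, _, _, _, ⟨_, _, _, f, _, _, hf, hK⟩ =>
    ((f.shortExact_shortComplexKer hf).subsingleton_ext_add_two_iff Y (m + t)).2
      (subsingleton_ext_add hY t hK)

theorem of_succ_of_subsingleton_ext : ∀ {k : ℕ} {M : Type u} [AddCommGroup M] [Module R M],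
    HasFGProjRes R (k + 1) M →
      Subsingleton (Abelian.Ext (ModuleCat.of R M) (ModuleCat.of R R) (k + 1)) →
        HasFGProjRes R k M
  | 0, M, _, _, ⟨_, _, _, f, _, _, hf, hK⟩, _ => by
    have := hK.1
    have := hK.2
    have := (ModuleCat.of R M).subsingleton_ext_of_finite_of_projective 1 (LinearMap.ker f)
    exact ⟨Module.Finite.of_surjective f hf,
      (IsProjective.iff_projective M).2 (f.shortExact_shortComplexKer hf).projective_X₃⟩
  | k + 1, _, _, _, ⟨P, _, _, f, hP, hP', hf, hK⟩, hM =>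
    ⟨P, _, _, f, hP, hP', hf, of_succ_of_subsingleton_ext hK
      (((f.shortExact_shortComplexKer hf).subsingleton_ext_add_two_iff _ k).1 hM)⟩

theorem exists_le_of_subsingleton_ext {d : ℕ}
    (hd : ∀ {n : ℕ} {M : Type u} [AddCommGroup M] [Module R M], HasFGProjRes R n M →
      Subsingleton (Abelian.Ext (ModuleCat.of R M) (ModuleCat.of R R) (d + 1))) :
    ∀ {n : ℕ} {M : Type u} [AddCommGroup M] [Module R M], HasFGProjRes R n M →
      ∃ k ≤ d, HasFGProjRes R k M
  | 0, _, _, _, hM => ⟨0, d.zero_le, hM⟩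
  | _ + 1, M, _, _, ⟨P, _, _, f, hP, hP', hf, hK⟩ => by
    obtain ⟨k, hkd, hk⟩ := exists_le_of_subsingleton_ext hd hK
    have hM : HasFGProjRes R (k + 1) M := ⟨P, _, _, f, hP, hP', hf, hk⟩
    rcases hkd.lt_or_eq with hlt | rfl
    · exact ⟨k + 1, hlt, hM⟩
    · exact ⟨k, le_rfl, hM.of_succ_of_subsingleton_ext (hd hM)⟩

end HasFGProjRes

end

/-- `fPD(R) ≤ FP-id_R(R)` : the small finitistic dimension of `R` is at most its
self-FP-injective dimension. -/
theorem fPDle_of_fpInjDimLE (R : Type u) [CommRing R] (d : ℕ) (h : FPInjDimLE R d) :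
    fPDle R d := by
  obtain ⟨m, hmd, hm⟩ := h
  have hm' (N : Type u) [AddCommGroup N] [Module R N] (hN : Module.FinitePresentation R N) :
      Subsingleton (Abelian.Ext (ModuleCat.of R N) (ModuleCat.of R R) (m + 1)) :=
    (ModuleCat.subsingleton_ext_succ_iff_abelianExt _ _ m).1 (hm N hN)
  obtain ⟨t, rfl⟩ := Nat.exists_eq_add_of_le hmd
  rintro M _ _ ⟨n, hM⟩
  exact hM.exists_le_of_subsingleton_ext fun hN => hN.subsingleton_ext_add hm' t
end

section
/- Let R be a commutative ring such that every finitely presented cyclic R-module has projective dimension at most d (i.e., R is a weak (1,d)-ring in the sense of Mahdou). Then fPD(R) ≤ d. -/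
universe u

/-- `HasProjResLen R d M` : there is an exact sequence `0 → P_d → ⋯ → P_0 → M → 0`
with each `P_i` projective; equivalently, the projective dimension of `M` is at most `d`. -/
def HasProjResLen (R : Type u) [CommRing R] :
    ℕ → (M : Type u) → [AddCommGroup M] → [Module R M] → Prop
  | 0, M, _, _ => Module.Projective R M
  | d + 1, M, _, _ => ∃ (P : Type u) (_ : AddCommGroup P) (_ : Module R P) (f : P →ₗ[R] M),
      Module.Projective R P ∧ Function.Surjective f ∧
      HasProjResLen R d (LinearMap.ker f)

/-!
If `M` has a resolution of length `n + 1 > d` by finitely generated projectives, its `n`-th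
syzygy `S` is finitely presented, and `Tor₁(R ⧸ I, S) ≅ Tor_{n+1}(R ⧸ I, M) = 0` for every
finitely generated ideal `I`, because `pd (R ⧸ I) ≤ d ≤ n`. Hence `S` is flat, so projective,
and the resolution can be shortened by one; repeat until its length is `d`.

`Tor₁` is never formed: its vanishing is expressed as the injectivity of a tensored inclusion,
and dimension shifting is the diagram chase showing that it does not matter whether `Tor₁(Z, K)`
is computed from a flat presentation of `Z` or from one of `K`.
-/

open LinearMap Function
open scoped TensorProduct

/-- `S` is a `k`-th syzygy: there are short exact sequences `0 → K_{j+1} → P_j → K_j → 0`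
for `j < k` with `P_j` projective and `K_k = S` (every module is a `0`-th syzygy). -/
def IsSyzygy (R : Type u) [CommRing R] :
    ℕ → (S : Type u) → [AddCommGroup S] → [Module R S] → Prop
  | 0, _, _, _ => True
  | k + 1, S, _, _ => ∃ (P : Type u) (_ : AddCommGroup P) (_ : Module R P)
      (K : Type u) (_ : AddCommGroup K) (_ : Module R K) (i : S →ₗ[R] P) (p : P →ₗ[R] K),
      Module.Projective R P ∧ Injective i ∧ Surjective p ∧ Exact i p ∧ IsSyzygy R k K

section TensorChase

variable {R : Type*} [CommRing R]

theorem LinearMap.rTensor_lTensor_comm_apply {M N P Q : Type*} [AddCommGroup M] [Module R M]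
    [AddCommGroup N] [Module R N] [AddCommGroup P] [Module R P] [AddCommGroup Q] [Module R Q]
    (f : M →ₗ[R] P) (g : N →ₗ[R] Q) (x : M ⊗[R] N) :
    f.rTensor Q (g.lTensor M x) = g.lTensor P (f.rTensor N x) := by
  rw [← comp_apply, rTensor_comp_lTensor, ← lTensor_comp_rTensor, comp_apply]

variable {W Q Z S P K : Type*} [AddCommGroup W] [Module R W] [AddCommGroup Q] [Module R Q]
  [AddCommGroup Z] [Module R Z] [AddCommGroup S] [Module R S] [AddCommGroup P] [Module R P]
  [AddCommGroup K] [Module R K]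

/-- Both injectivities say `Tor₁(Z, K) = 0`, computed from the flat presentations
`0 → W → Q → Z → 0` and `0 → S → P → K → 0` respectively. -/
theorem lTensor_injective_of_rTensor_injective_of_exact [Module.Flat R Q] [Module.Flat R P]
    {h : W →ₗ[R] Q} {π : Q →ₗ[R] Z} (hhπ : Exact h π) (hπ : Surjective π)
    {i : S →ₗ[R] P} {p : P →ₗ[R] K} (hip : Exact i p) (hi : Injective i) (hp : Surjective p)
    (H : Injective (h.rTensor K)) : Injective (i.lTensor Z) := by
  rw [injective_iff_map_eq_zero]
  intro v hv
  obtain ⟨s, rfl⟩ := rTensor_surjective S hπ v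
  have hs : π.rTensor P (i.lTensor Q s) = 0 := by rw [rTensor_lTensor_comm_apply, hv]
  obtain ⟨t, ht⟩ := (Module.Flat.rTensor_exact P hhπ (i.lTensor Q s)).mp hs
  have ht0 : p.lTensor W t = 0 := by
    apply (injective_iff_map_eq_zero _).mp H
    rw [rTensor_lTensor_comm_apply, ht, ← lTensor_comp_apply, hip.linearMap_comp_eq_zero,
      lTensor_zero, LinearMap.zero_apply]
  obtain ⟨u, rfl⟩ := (lTensor_exact W hip hp t).mp ht0
  have hu : h.rTensor S u = s := by
    apply Module.Flat.lTensor_preserves_injective_linearMap i hi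
    rw [← rTensor_lTensor_comm_apply, ht]
  rw [← hu, ← rTensor_comp_apply, hhπ.linearMap_comp_eq_zero, rTensor_zero, LinearMap.zero_apply]

theorem rTensor_injective_iff_lTensor_injective_of_exact [Module.Flat R Q] [Module.Flat R P]
    {h : W →ₗ[R] Q} {π : Q →ₗ[R] Z} (hhπ : Exact h π) (hh : Injective h) (hπ : Surjective π)
    {i : S →ₗ[R] P} {p : P →ₗ[R] K} (hip : Exact i p) (hi : Injective i) (hp : Surjective p) :
    Injective (h.rTensor K) ↔ Injective (i.lTensor Z) := by
  refine ⟨lTensor_injective_of_rTensor_injective_of_exact hhπ hπ hip hi hp, fun H ↦ ?_⟩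
  rw [← lTensor_inj_iff_rTensor_inj]
  exact lTensor_injective_of_rTensor_injective_of_exact hip hp hhπ hh hπ
    ((lTensor_inj_iff_rTensor_inj _ _).mp H)

theorem rTensor_injective_of_lTensor_injective [Module.Flat R P] {g : Z →ₗ[R] Q}
    (hg : Injective g) {i : S →ₗ[R] P} (H : Injective (i.lTensor Z)) :
    Injective (g.rTensor S) := by
  have hcomp : Injective (i.lTensor Q ∘ g.rTensor S) := by
    rw [← coe_comp, lTensor_comp_rTensor, ← rTensor_comp_lTensor, coe_comp]
    exact (Module.Flat.rTensor_preserves_injective_linearMap g hg).comp H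
  exact hcomp.of_comp

end TensorChase

variable {R : Type u} [CommRing R]

theorem IsSyzygy.of_succ : ∀ {k : ℕ} {S : Type u} [AddCommGroup S] [Module R S],
    IsSyzygy R (k + 1) S → IsSyzygy R k S
  | 0, _, _, _, _ => trivial
  | _ + 1, _, _, _, ⟨P, _, _, K, _, _, i, p, hP, hi, hp, hip, hK⟩ =>
    ⟨P, _, _, K, _, _, i, p, hP, hi, hp, hip, hK.of_succ⟩

theorem IsSyzygy.mono {k n : ℕ} (hkn : k ≤ n) {S : Type u} [AddCommGroup S] [Module R S]
    (hS : IsSyzygy R n S) : IsSyzygy R k S := by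
  induction hkn with
  | refl => exact hS
  | step _ ih => exact ih hS.of_succ

theorem lTensor_injective_of_hasProjResLen_of_isSyzygy (k : ℕ) {Z K : Type u}
    [AddCommGroup Z] [Module R Z] [AddCommGroup K] [Module R K]
    (hZ : HasProjResLen R k Z) (hK : IsSyzygy R k K)
    {S P : Type u} [AddCommGroup S] [Module R S] [AddCommGroup P] [Module R P] [Module.Flat R P]
    {i : S →ₗ[R] P} {p : P →ₗ[R] K} (hip : Exact i p) (hi : Injective i) (hp : Surjective p) :
    Injective (i.lTensor Z) := by
  induction k generalizing Z K S P with
  | zero =>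
    have : Module.Projective R Z := hZ
    exact Module.Flat.lTensor_preserves_injective_linearMap i hi
  | succ k ih =>
    obtain ⟨Q, _, _, π, hQ, hπ, hker⟩ := hZ
    obtain ⟨P', _, _, K', _, _, j, q, hP', hj, hq, hjq, hK'⟩ := hK
    have hker_j : Injective (j.lTensor (ker π)) := ih hker hK' hjq hj hq
    exact lTensor_injective_of_rTensor_injective_of_exact (exact_subtype_ker_map π) hπ hip hi hp
      (rTensor_injective_of_lTensor_injective (ker π).injective_subtype hker_j)

theorem flat_of_isSyzygy {d : ℕ}
    (hcyc : ∀ I : Ideal R, I.FG → ∃ k ≤ d, HasProjResLen R k (R ⧸ I))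
    {S : Type u} [AddCommGroup S] [Module R S] (hS : IsSyzygy R d S) : Module.Flat R S := by
  rw [Module.Flat.iff_rTensor_injective]
  intro I hI
  obtain ⟨k, hkd, hk⟩ := hcyc I hI
  have hπ := Finsupp.linearCombination_id_surjective R S
  rw [rTensor_injective_iff_lTensor_injective_of_exact (exact_subtype_mkQ I) I.injective_subtype
    I.mkQ_surjective (exact_subtype_ker_map _) (ker _).injective_subtype hπ]
  exact lTensor_injective_of_hasProjResLen_of_isSyzygy k hk (hS.mono hkd)
    (exact_subtype_ker_map _) (ker _).injective_subtype hπ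

theorem HasFGProjRes.finite_s9 : ∀ {k : ℕ} {M : Type u} [AddCommGroup M] [Module R M],
    HasFGProjRes R k M → Module.Finite R M
  | 0, _, _, _, hM => hM.1
  | _ + 1, _, _, _, ⟨_, _, _, f, _, _, hf, _⟩ => Module.Finite.of_surjective f hf

theorem HasFGProjRes.finitePresentation_s9 {M : Type u} [AddCommGroup M] [Module R M]
    (hM : HasFGProjRes R 1 M) : Module.FinitePresentation R M := by
  obtain ⟨P, _, _, f, hPfin, hPproj, hf, hker⟩ := hM
  have : Module.FinitePresentation R P := Module.finitePresentation_of_projective R P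
  exact Module.finitePresentation_of_surjective f hf (Module.Finite.iff_fg.mp hker.finite_s9)

/-- `S` is the `j`-th syzygy of `M` in the given resolution. -/
theorem exists_syzygy_of_hasFGProjRes : ∀ (j c : ℕ) {M : Type u} [AddCommGroup M] [Module R M],
    IsSyzygy R c M → HasFGProjRes R (j + 1) M →
    ∃ (S : Type u) (_ : AddCommGroup S) (_ : Module R S),
      HasFGProjRes R 1 S ∧ IsSyzygy R (c + j) S ∧ (Module.Projective R S → HasFGProjRes R j M)
  | 0, _, M, _, _, hc, hres => ⟨M, _, _, hres, hc, fun hproj ↦ ⟨hres.finite_s9, hproj⟩⟩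
  | j + 1, c, M, _, _, hc, ⟨P, _, _, f, hPfin, hPproj, hf, hker⟩ => by
    have hc_ker : IsSyzygy R (c + 1) (ker f) :=
      ⟨P, _, _, M, _, _, (ker f).subtype, f, hPproj, (ker f).injective_subtype, hf,
        exact_subtype_ker_map f, hc⟩
    obtain ⟨S, _, _, hS, hSc, hend⟩ := exists_syzygy_of_hasFGProjRes j (c + 1) hc_ker hker
    refine ⟨S, _, _, hS, by rwa [add_right_comm] at hSc, ?_⟩
    exact fun hproj ↦ ⟨P, _, _, f, hPfin, hPproj, hf, hend hproj⟩

theorem HasFGProjRes.of_succ_of_le {d n : ℕ}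
    (hcyc : ∀ I : Ideal R, I.FG → ∃ k ≤ d, HasProjResLen R k (R ⧸ I)) (hdn : d ≤ n)
    {M : Type u} [AddCommGroup M] [Module R M] (hM : HasFGProjRes R (n + 1) M) :
    HasFGProjRes R n M := by
  obtain ⟨S, _, _, hS, hSn, hend⟩ := exists_syzygy_of_hasFGProjRes n 0 trivial hM
  have : Module.FinitePresentation R S := hS.finitePresentation_s9
  have : Module.Flat R S := flat_of_isSyzygy hcyc ((zero_add n ▸ hSn).mono hdn)
  exact hend Module.Flat.projective_of_finitePresentation

theorem HasFGProjRes.of_add {d : ℕ}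
    (hcyc : ∀ I : Ideal R, I.FG → ∃ k ≤ d, HasProjResLen R k (R ⧸ I))
    {M : Type u} [AddCommGroup M] [Module R M] :
    ∀ j : ℕ, HasFGProjRes R (d + j) M → HasFGProjRes R d M
  | 0, hM => hM
  | j + 1, hM => HasFGProjRes.of_add hcyc j (hM.of_succ_of_le hcyc (Nat.le_add_right d j))

/-- Every weak `(1, d)`-ring in the sense of Mahdou (every finitely presented cyclic module
has projective dimension at most `d`) has small finitistic dimension at most `d`. -/
theorem fPDle_of_weak_1d_ring_Mahdou (R : Type u) [CommRing R] (d : ℕ)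
    (h : ∀ (M : Type u) [AddCommGroup M] [Module R M],
      Module.FinitePresentation R M → (∃ m : M, Submodule.span R {m} = ⊤) →
      ∃ k ≤ d, HasProjResLen R k M) :
    fPDle R d := by
  have hcyc (I : Ideal R) (hI : I.FG) : ∃ k ≤ d, HasProjResLen R k (R ⧸ I) :=
    h (R ⧸ I) (Module.finitePresentation_of_surjective I.mkQ I.mkQ_surjective
      (by rwa [Submodule.ker_mkQ])) ⟨1, Ideal.Quotient.span_singleton_one I⟩
  rintro M _ _ ⟨m, hm⟩
  rcases le_total m d with hmd | hdm
  · exact ⟨m, hmd, hm⟩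
  · obtain ⟨j, rfl⟩ := Nat.exists_eq_add_of_le hdm
    exact ⟨d, le_rfl, hm.of_add hcyc j⟩
end

section
/- Let R be a commutative ring with FP-id_R(R) ≤ 1. Then R is a DW-ring, i.e., every GV-ideal of R equals R. -/
universe u

open CategoryTheory Opposite

/-- `J` is a GV-ideal: `J` is finitely generated and
`Hom_R(R/J, R) = Ext_R^1(R/J, R) = 0`. -/
def IsGVIdeal (R : Type u) [CommRing R] (J : Ideal R) : Prop :=
  J.FG ∧ Subsingleton (extMod R (R ⧸ J) R 0) ∧ Subsingleton (extMod R (R ⧸ J) R 1)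

/-- `R` is a DW-ring: the only GV-ideal of `R` is `R` itself. -/
def IsDWRing (R : Type u) [CommRing R] : Prop :=
  ∀ J : Ideal R, IsGVIdeal R J → J = ⊤

/-- An element `m` of a module is GV-torsion if `Jm = 0` for some GV-ideal `J`. -/
def IsGVTorsionElem (R : Type u) [CommRing R] {M : Type u} [AddCommGroup M] [Module R M]
    (m : M) : Prop :=
  ∃ J : Ideal R, IsGVIdeal R J ∧ ∀ r ∈ J, r • m = 0

/-- A module is GV-torsion if each of its elements is GV-torsion. -/
def IsGVTorsion (R : Type u) [CommRing R] (M : Type u) [AddCommGroup M] [Module R M] : Prop :=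
  ∀ m : M, IsGVTorsionElem R m

/-- A module is GV-torsion-free if its only GV-torsion element is `0`. -/
def IsGVTorsionFree (R : Type u) [CommRing R] (M : Type u) [AddCommGroup M] [Module R M] : Prop :=
  ∀ m : M, IsGVTorsionElem R m → m = 0

/-- `M` is a `w`-module: `M` is GV-torsion-free and `Ext_R^1(R/J, M) = 0`
for every GV-ideal `J`. -/
def IsWModule (R : Type u) [CommRing R] (M : Type u) [AddCommGroup M] [Module R M] : Prop :=
  IsGVTorsionFree R M ∧ ∀ J : Ideal R, IsGVIdeal R J → Subsingleton (extMod R (R ⧸ J) M 1)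

/-!
Let `J = (a₁, …, aₙ)` be a GV-ideal and compute `Ext_R^*(R/J, R)` with a projective resolution
beginning `Rⁿ --a--> R → R/J → 0`. Then `Hom(R/J, R) = 0` says that `r ↦ r • a` is injective, and
`Ext¹(R/J, R) = 0` says that every `x ∈ Rⁿ` whose `2 × 2` minors `a_j x_i - a_i x_j` vanish is a
multiple of `a`. Hence `0 → R --a--> Rⁿ --minors--> R^{n×n}` is exact, and `R --a--> Rⁿ` is the
last differential of projective resolutions of `Rⁿ/Ra` (length one) and of `R^{n×n}/im(minors)`
(length two), both finitely presented. Since `FP-id_R(R) ≤ 1`, `Ext¹(Rⁿ/Ra, R)` or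
`Ext²(R^{n×n}/im(minors), R)` vanishes; either way the identity of `R` extends along
`a : R → Rⁿ`, i.e. some linear form `γ` has `γ a = 1`, and then `1 = Σ aᵢ γ(eᵢ) ∈ J`.
-/

namespace CategoryTheory

open Limits Projective

lemma Projective.d_comp {C : Type*} [Category* C] [HasZeroMorphisms C] [EnoughProjectives C]
    {X Y : C} (f : X ⟶ Y) [HasKernel f] : d f ≫ f = 0 :=
  (Category.assoc _ _ _).trans ((congrArg _ (kernel.condition f)).trans comp_zero)

namespace ProjectiveResolution

variable {C : Type*} [Category* C] [Abelian C] [EnoughProjectives C]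

section OfExact

variable {X₀ X₁ X₂ : C} (d₀ : X₁ ⟶ X₀) (d₁ : X₂ ⟶ X₁) (w : d₁ ≫ d₀ = 0)

noncomputable def complexOfExact₂ : ChainComplex C ℕ :=
  ChainComplex.mk X₀ X₁ X₂ d₀ d₁ w fun S => ⟨syzygies S.f, d S.f, d_comp S.f⟩

lemma complexOfExact₂_exactAt_succ (hw : (ShortComplex.mk d₁ d₀ w).Exact) (n : ℕ) :
    (complexOfExact₂ d₀ d₁ w).ExactAt (n + 1) := by
  rw [HomologicalComplex.exactAt_iff' _ (n + 2) (n + 1) n (by simp) (by simp)]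
  change (ShortComplex.mk _ _ _).Exact
  rw [complexOfExact₂, ← ChainComplex.mkAux_eq_shortComplex_mk_d_comp_d]
  cases n
  · exact hw
  · exact exact_d_f _

instance [Projective X₀] [Projective X₁] [Projective X₂] (n : ℕ) :
    Projective ((complexOfExact₂ d₀ d₁ w).X n) := by
  match n with
  | 0 | 1 | 2 => assumption
  | _ + 3 => exact projective_over ..

@[simp]
lemma complexOfExact₂_d_one_zero : (complexOfExact₂ d₀ d₁ w).d 1 0 = d₀ :=
  ChainComplex.mk_d_1_0 ..

@[simp]
lemma complexOfExact₂_d_two_one : (complexOfExact₂ d₀ d₁ w).d 2 1 = d₁ :=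
  ChainComplex.mk_d_2_1 ..

noncomputable def ofExact₂ [Projective X₀] [Projective X₁] [Projective X₂]
    (hw : (ShortComplex.mk d₁ d₀ w).Exact) {Z : C} (π : X₀ ⟶ Z) [Epi π]
    (hπ : d₀ ≫ π = 0) (hπ' : (ShortComplex.mk d₀ π hπ).Exact) :
    ProjectiveResolution Z where
  complex := complexOfExact₂ d₀ d₁ w
  π := (ChainComplex.toSingle₀Equiv _ _).symm ⟨π, by rwa [complexOfExact₂_d_one_zero]⟩
  quasiIso := ⟨fun n => by
    cases n with
    | zero =>
      rw [ChainComplex.quasiIsoAt₀_iff, ShortComplex.quasiIso_iff_of_zeros' _ rfl rfl rfl]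
      refine (ShortComplex.exact_and_epi_g_iff_of_iso ?_).2 ⟨hπ', ‹_›⟩
      exact ShortComplex.isoMk (Iso.refl _) (Iso.refl _) (Iso.refl _)
        (by erw [Category.id_comp, Category.comp_id]; exact (complexOfExact₂_d_one_zero ..).symm)
        (by erw [Category.id_comp, Category.comp_id]
            exact (ChainComplex.toSingle₀Equiv_symm_apply_f_zero
              (C := complexOfExact₂ d₀ d₁ w) _ _).symm)
    | succ n =>
      rw [quasiIsoAt_iff_exactAt' _ _ (ChainComplex.exactAt_succ_single_obj ..)]
      exact complexOfExact₂_exactAt_succ d₀ d₁ w hw n⟩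

end OfExact

section Ext

variable {R : Type*} [Ring R] [Linear R C] {Z : C} (P : ProjectiveResolution Z) (Y : C)

lemma exactAt_linearYonedaObj_of_subsingleton_ext {k : ℕ}
    (h : Subsingleton (((Ext R C k).obj (op Z)).obj Y)) :
    (P.complex.linearYonedaObj R Y).ExactAt k := by
  rw [HomologicalComplex.exactAt_iff_isZero_homology]
  exact IsZero.of_iso (ModuleCat.isZero_of_subsingleton _) (P.isoExt k Y).symm

lemma eq_zero_of_subsingleton_ext_zero (h : Subsingleton (((Ext R C 0).obj (op Z)).obj Y))
    (f : P.complex.X 0 ⟶ Y) (hf : P.complex.d 1 0 ≫ f = 0) : f = 0 := by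
  have hexact := P.exactAt_linearYonedaObj_of_subsingleton_ext Y h
  rw [HomologicalComplex.exactAt_iff' _ 0 0 1 (by simp) (by simp),
    ShortComplex.moduleCat_exact_iff] at hexact
  obtain ⟨g, rfl⟩ := hexact f hf
  exact congr($((P.complex.linearYonedaObj R Y).shape 0 0 (by simp)).hom g)

lemma exists_d_comp_eq_of_subsingleton_ext (k : ℕ)
    (h : Subsingleton (((Ext R C (k + 1)).obj (op Z)).obj Y))
    (f : P.complex.X (k + 1) ⟶ Y) (hf : P.complex.d (k + 2) (k + 1) ≫ f = 0) :
    ∃ g : P.complex.X k ⟶ Y, P.complex.d (k + 1) k ≫ g = f := by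
  have hexact := P.exactAt_linearYonedaObj_of_subsingleton_ext Y h
  rw [HomologicalComplex.exactAt_iff' _ k (k + 1) (k + 2) (by simp) (by simp),
    ShortComplex.moduleCat_exact_iff] at hexact
  exact hexact f hf

lemma isSplitMono_d_of_subsingleton_ext (k : ℕ) [Mono (P.complex.d (k + 1) k)]
    (h : Subsingleton (((Ext R C (k + 1)).obj (op Z)).obj (P.complex.X (k + 1)))) :
    IsSplitMono (P.complex.d (k + 1) k) := by
  have hd : P.complex.d (k + 2) (k + 1) = 0 := by
    rw [← cancel_mono (P.complex.d (k + 1) k), HomologicalComplex.d_comp_d, zero_comp]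
  obtain ⟨g, hg⟩ :=
    P.exists_d_comp_eq_of_subsingleton_ext _ k h (𝟙 _) (by rw [hd, zero_comp])
  exact ⟨⟨g, hg⟩⟩

end Ext

section ModuleCat

variable {R : Type u} [Ring R] {X₀ X₁ X₂ : ModuleCat.{u} R}
  [Projective X₀] [Projective X₁] [Projective X₂]

noncomputable def ofQuotient (d₀ : X₁ ⟶ X₀) (d₁ : X₂ ⟶ X₁) (w : d₁ ≫ d₀ = 0)
    (hw : (ShortComplex.mk d₁ d₀ w).Exact) (K : Submodule R X₀)
    (hK : LinearMap.range d₀.hom = K) :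
    ProjectiveResolution (ModuleCat.of R (X₀ ⧸ K)) :=
  haveI : Epi (ModuleCat.ofHom K.mkQ) :=
    (ModuleCat.epi_iff_surjective _).2 K.mkQ_surjective
  ofExact₂ d₀ d₁ w hw (ModuleCat.ofHom K.mkQ)
    (ModuleCat.hom_ext <| LinearMap.ext fun x =>
      (Submodule.Quotient.mk_eq_zero K).2 (hK ▸ ⟨x, rfl⟩))
    (by rw [ShortComplex.moduleCat_exact_iff_range_eq_ker]; exact hK.trans K.ker_mkQ.symm)

variable (d₀ : X₁ ⟶ X₀) (d₁ : X₂ ⟶ X₁) (w : d₁ ≫ d₀ = 0)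
  (hw : (ShortComplex.mk d₁ d₀ w).Exact) (K : Submodule R X₀)
  (hK : LinearMap.range d₀.hom = K)

@[simp]
lemma ofQuotient_complex_d_one_zero : (ofQuotient d₀ d₁ w hw K hK).complex.d 1 0 = d₀ :=
  complexOfExact₂_d_one_zero ..

@[simp]
lemma ofQuotient_complex_d_two_one : (ofQuotient d₀ d₁ w hw K hK).complex.d 2 1 = d₁ :=
  complexOfExact₂_d_two_one ..

end ModuleCat

end ProjectiveResolution

end CategoryTheory

section

open ProjectiveResolution LinearMap

variable {R : Type u} [CommRing R] {ι : Type*}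

lemma Ideal.span_range_eq_top_of_apply_eq_one [Fintype ι] [DecidableEq ι] {a : ι → R}
    (γ : (ι → R) →ₗ[R] R) (hγ : γ a = 1) : Ideal.span (Set.range a) = ⊤ := by
  rw [Ideal.eq_top_iff_one, ← hγ, γ.pi_apply_eq_sum_univ a]
  exact Ideal.sum_mem _ fun i _ => Ideal.mul_mem_right _ _ (Ideal.subset_span ⟨i, rfl⟩)

noncomputable def minorsMap (a : ι → R) : (ι → R) →ₗ[R] (ι × ι → R) :=
  LinearMap.pi fun p => a p.2 • proj p.1 - a p.1 • proj p.2

lemma minorsMap_apply (a x : ι → R) (p : ι × ι) :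
    minorsMap a x p = a p.2 * x p.1 - a p.1 * x p.2 := by
  simp [minorsMap]

lemma linearCombination_smul_eq_zero_of_minorsMap_eq_zero [Fintype ι] {a x y : ι → R}
    (hx : minorsMap a x = 0) (hy : Fintype.linearCombination R a y = 0) :
    Fintype.linearCombination R x y • a = 0 := by
  ext j
  have hx' (i : ι) : a j * x i = a i * x j := by
    simpa [minorsMap_apply, sub_eq_zero] using congrFun hx (i, j)
  calc Fintype.linearCombination R x y * a j = ∑ i, y i * (a j * x i) := by
        simp [Fintype.linearCombination_apply, Finset.mul_sum, mul_comm, mul_left_comm]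
    _ = Fintype.linearCombination R a y * x j := by
        simp [Fintype.linearCombination_apply, Finset.sum_mul, hx', mul_assoc]
    _ = 0 := by rw [hy, zero_mul]

variable {n : ℕ} (a : Fin n → R)

noncomputable def quotientSpanResolution :
    ProjectiveResolution (ModuleCat.of R (R ⧸ Ideal.span (Set.range a))) :=
  ofQuotient (X₀ := ModuleCat.of R R) (ModuleCat.ofHom (Fintype.linearCombination R a))
    (Projective.d _) (Projective.d_comp _) (exact_d_f _) _ (Fintype.range_linearCombination R a)

@[simp]
lemma quotientSpanResolution_complex_d_one_zero :
    (quotientSpanResolution a).complex.d 1 0 = ModuleCat.ofHom (Fintype.linearCombination R a) :=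
  ofQuotient_complex_d_one_zero ..

lemma toSpanSingleton_injective_of_subsingleton_ext_zero
    (h0 : Subsingleton (extMod R (R ⧸ Ideal.span (Set.range a)) R 0)) :
    Function.Injective (toSpanSingleton R (Fin n → R) a) := by
  refine (injective_iff_map_eq_zero _).2 fun r hr => ?_
  have hf := (quotientSpanResolution a).eq_zero_of_subsingleton_ext_zero _ h0
    (ModuleCat.ofHom (toSpanSingleton R R r)) ?_
  · have h1 := congr(($hf).hom (1 : R))
    simp only [ConcreteCategory.hom_ofHom, toSpanSingleton_apply, smul_eq_mul, one_mul,
      ModuleCat.hom_zero] at h1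
    exact h1
  · rw [quotientSpanResolution_complex_d_one_zero]
    ext (x : Fin n → R)
    have hr' (i : Fin n) : a i * r = 0 := by simpa [mul_comm] using congrFun hr i
    show Fintype.linearCombination R a x • r = 0
    simp [Fintype.linearCombination_apply, Finset.sum_mul, mul_assoc, hr']

lemma range_toSpanSingleton_eq_ker_minorsMap
    (h0 : Subsingleton (extMod R (R ⧸ Ideal.span (Set.range a)) R 0))
    (h1 : Subsingleton (extMod R (R ⧸ Ideal.span (Set.range a)) R 1)) :
    range (toSpanSingleton R (Fin n → R) a) = ker (minorsMap a) := by
  refine le_antisymm ?_ fun x hx => ?_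
  · rintro _ ⟨r, rfl⟩
    ext p
    simp only [toSpanSingleton_apply, minorsMap_apply, Pi.smul_apply, smul_eq_mul, Pi.zero_apply]
    ring
  have hf : (quotientSpanResolution a).complex.d 2 1 ≫
      ModuleCat.ofHom (Fintype.linearCombination R x) = 0 := by
    ext z
    have hy := congrArg (fun f => f.hom z) ((quotientSpanResolution a).complex.d_comp_d 2 1 0)
    simp only [quotientSpanResolution_complex_d_one_zero] at hy
    show Fintype.linearCombination R x ((quotientSpanResolution a).complex.d 2 1 z) = 0
    exact (injective_iff_map_eq_zero _).1 (toSpanSingleton_injective_of_subsingleton_ext_zero a h0)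
      _ (linearCombination_smul_eq_zero_of_minorsMap_eq_zero hx hy)
  obtain ⟨g, hg⟩ := (quotientSpanResolution a).exists_d_comp_eq_of_subsingleton_ext _ 0 h1 _ hf
  let γ : R →ₗ[R] R := g.hom
  have hγ : γ ∘ₗ Fintype.linearCombination R a = Fintype.linearCombination R x :=
    congrArg ModuleCat.Hom.hom hg
  refine ⟨γ 1, funext fun i => ?_⟩
  have hγi := congr($hγ (Pi.single i 1))
  simp only [LinearMap.comp_apply, Fintype.linearCombination_apply_single, smul_eq_mul,
    one_mul] at hγi
  calc (γ 1 • a) i = a i • γ 1 := mul_comm _ _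
    _ = γ (a i • 1) := (map_smul γ _ _).symm
    _ = x i := by rwa [smul_eq_mul, mul_one]

lemma span_range_eq_top_of_isSplitMono
    (h : IsSplitMono (ModuleCat.ofHom (toSpanSingleton R (Fin n → R) a))) :
    Ideal.span (Set.range a) = ⊤ := by
  obtain ⟨⟨γ, hγ⟩⟩ := h
  exact Ideal.span_range_eq_top_of_apply_eq_one γ.hom (by simpa using congr(($hγ).hom (1 : R)))

lemma span_range_eq_top_of_subsingleton_ext_one
    (h0 : Subsingleton (extMod R (R ⧸ Ideal.span (Set.range a)) R 0))
    (h : Subsingleton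
      (extMod R ((Fin n → R) ⧸ range (toSpanSingleton R (Fin n → R) a)) R 1)) :
    Ideal.span (Set.range a) = ⊤ := by
  let P := ofQuotient (X₁ := ModuleCat.of R R)
    (ModuleCat.ofHom (toSpanSingleton R (Fin n → R) a))
    (Projective.d _) (Projective.d_comp _) (exact_d_f _) _ rfl
  have : Mono (P.complex.d 1 0) := by
    rw [ofQuotient_complex_d_one_zero]
    exact (ModuleCat.mono_iff_injective _).2
      (toSpanSingleton_injective_of_subsingleton_ext_zero a h0)
  exact span_range_eq_top_of_isSplitMono a (P.isSplitMono_d_of_subsingleton_ext 0 h)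

lemma span_range_eq_top_of_subsingleton_ext_two
    (h0 : Subsingleton (extMod R (R ⧸ Ideal.span (Set.range a)) R 0))
    (h1 : Subsingleton (extMod R (R ⧸ Ideal.span (Set.range a)) R 1))
    (h : Subsingleton (extMod R ((Fin n × Fin n → R) ⧸ range (minorsMap a)) R 2)) :
    Ideal.span (Set.range a) = ⊤ := by
  have hexact := range_toSpanSingleton_eq_ker_minorsMap a h0 h1
  let P := ofQuotient (X₂ := ModuleCat.of R R) (ModuleCat.ofHom (minorsMap a))
    (ModuleCat.ofHom (toSpanSingleton R (Fin n → R) a))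
    (ModuleCat.hom_ext (range_le_ker_iff.1 hexact.le))
    ((ShortComplex.moduleCat_exact_iff_range_eq_ker _).2 hexact) _ rfl
  have : Mono (P.complex.d 2 1) := by
    rw [ofQuotient_complex_d_two_one]
    exact (ModuleCat.mono_iff_injective _).2
      (toSpanSingleton_injective_of_subsingleton_ext_zero a h0)
  exact span_range_eq_top_of_isSplitMono a (P.isSplitMono_d_of_subsingleton_ext 1 h)

end

lemma Module.finitePresentation_quotient_range {R M N : Type*} [Ring R] [AddCommGroup M]
    [Module R M] [AddCommGroup N] [Module R N] [Module.FinitePresentation R M]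
    [Module.Finite R N] (f : N →ₗ[R] M) : Module.FinitePresentation R (M ⧸ LinearMap.range f) :=
  Module.finitePresentation_of_surjective _ (Submodule.mkQ_surjective _)
    (by rw [Submodule.ker_mkQ]; exact Submodule.fg_range f)

/-- If the self-FP-injective dimension of `R` is at most `1`, then `R` is a DW-ring. -/
theorem isDWRing_of_fpInjDimLE_one (R : Type u) [CommRing R] (h : FPInjDimLE R 1) :
    IsDWRing R := by
  obtain ⟨m, hm, hExt⟩ := h
  rintro J ⟨hfg, h0, h1⟩
  obtain ⟨n, a, rfl⟩ := Submodule.fg_iff_exists_fin_generating_family.mp hfg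
  interval_cases m
  · exact span_range_eq_top_of_subsingleton_ext_one a h0
      (hExt _ (Module.finitePresentation_quotient_range _))
  · exact span_range_eq_top_of_subsingleton_ext_two a h0 h1
      (hExt _ (Module.finitePresentation_quotient_range _))
end

section
/- Let k be a field, D = k[x,y], Q = Frac(D), and let R = D(+)(Q/D) be the idealization (trivial extension) of D by Q/D. Then the ideal m = (x,y)(+)(Q/D) of R is semiregular: its annihilator in R is zero (indeed every element of R annihilated by m is zero). -/
set_option synthInstance.maxHeartbeats 1000000
set_option maxHeartbeats 1000000

universe u

open TrivSqZeroExt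

variable (k : Type u) [Field k]

/-- `D = k[x, y]`, the polynomial ring in two variables over `k`. -/
abbrev PolyD : Type u := MvPolynomial (Fin 2) k

/-- `Q = Frac(D)`, the quotient field of `D = k[x, y]`. -/
abbrev QuotQ : Type u := FractionRing (PolyD k)

/-- The `D`-module `Q/D`. -/
abbrev QmodD : Type u :=
  QuotQ k ⧸ LinearMap.range (Algebra.linearMap (PolyD k) (QuotQ k))

/-- `R = D(+)(Q/D)`, the idealization (trivial extension) of `D = k[x, y]` by `Q/D`. -/
abbrev IdealizationR : Type u := TrivSqZeroExt (PolyD k) (QmodD k)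

/-- The ideal `m = (x, y)(+)(Q/D)` of `R = D(+)(Q/D)`, consisting of all pairs `(f, q̄)`
with `f ∈ (x, y)` and `q̄ ∈ Q/D`. -/
noncomputable def mIdeal : Ideal (IdealizationR k) where
  carrier := {z | fst z ∈ Ideal.span ({MvPolynomial.X 0, MvPolynomial.X 1} :
    Set (PolyD k))}
  zero_mem' := by
    simp only [Set.mem_setOf_eq, fst_zero]
    exact zero_mem _
  add_mem' := by
    intro a b ha hb
    simp only [Set.mem_setOf_eq, fst_add] at *
    exact add_mem ha hb
  smul_mem' := by
    intro c z hz
    simp only [Set.mem_setOf_eq, smul_eq_mul, fst_mul] at *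
    exact Ideal.mul_mem_left _ _ hz

/-!
An element `(f, q̄)` killed by `x` and `y` has `x f = 0`, so `f = 0`, and `x q̄ = y q̄ = 0` in `Q/D`.
Lifting `q̄` to `q ∈ Q`, both `x q` and `y q` lie in `D`, and since `x` and `y` are coprime in the
UFD `D`, this forces `q ∈ D`, i.e. `q̄ = 0`.
-/

section FractionRing

variable {D K : Type*} [CommRing D] [DecompositionMonoid D] [Field K] [Algebra D K]
  [IsFractionRing D K]

theorem mem_range_algebraMap_of_smul_mem_of_isRelPrime {a b : D} (hab : IsRelPrime a b)
    (ha : a ≠ 0) {q : K} (hqa : a • q ∈ Set.range (algebraMap D K))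
    (hqb : b • q ∈ Set.range (algebraMap D K)) : q ∈ Set.range (algebraMap D K) := by
  obtain ⟨p, hp⟩ := hqa
  obtain ⟨r, hr⟩ := hqb
  rw [Algebra.smul_def] at hp hr
  have hinj := IsFractionRing.injective D K
  have hbp : b * p = a * r := hinj <| by
    rw [map_mul, map_mul, hp, hr]; ring
  obtain ⟨s, rfl⟩ := hab.dvd_of_dvd_mul_left ⟨r, hbp⟩
  refine ⟨s, mul_left_cancel₀ ((map_ne_zero_iff _ hinj).2 ha) ?_⟩
  rw [← map_mul, hp]

theorem eq_zero_of_smul_eq_zero_of_isRelPrime {a b : D} (hab : IsRelPrime a b) (ha : a ≠ 0)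
    {m : K ⧸ LinearMap.range (Algebra.linearMap D K)} (hma : a • m = 0) (hmb : b • m = 0) :
    m = 0 := by
  obtain ⟨q, rfl⟩ := Submodule.Quotient.mk_surjective _ m
  rw [← Submodule.Quotient.mk_smul, Submodule.Quotient.mk_eq_zero] at hma hmb
  exact (Submodule.Quotient.mk_eq_zero _).2
    (mem_range_algebraMap_of_smul_mem_of_isRelPrime hab ha hma hmb)

end FractionRing

theorem MvPolynomial.isRelPrime_X_X {σ R : Type*} [CommRing R] [IsDomain R] {i j : σ}
    (hij : i ≠ j) : IsRelPrime (X i : MvPolynomial σ R) (X j) :=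
  X_prime.irreducible.isRelPrime_iff_not_dvd.2 (by simpa using hij)

theorem TrivSqZeroExt.smul_eq_zero_iff {S R M : Type*} [Zero R] [Zero M] [SMul S R] [SMul S M]
    {r : S} {x : TrivSqZeroExt R M} : r • x = 0 ↔ r • x.fst = 0 ∧ r • x.snd = 0 :=
  TrivSqZeroExt.ext_iff

theorem inl_X_mem_mIdeal (i : Fin 2) : (inl (MvPolynomial.X i) : IdealizationR k) ∈ mIdeal k := by
  show MvPolynomial.X i ∈ Ideal.span _
  fin_cases i
  · exact Ideal.subset_span (Or.inl rfl)
  · exact Ideal.subset_span (Or.inr rfl)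

/-- The ideal `m = (x, y)(+)(Q/D)` of the idealization `R = k[x,y](+)(Q/D)` is semiregular:
every element of `R` annihilated by `m` is zero, i.e. the annihilator of `m` in `R` is zero. -/
theorem mIdeal_semiregular (z : IdealizationR k) (hz : ∀ w ∈ mIdeal k, w * z = 0) :
    z = 0 := by
  have hX : ∀ i : Fin 2, MvPolynomial.X i • z.fst = 0 ∧ MvPolynomial.X i • z.snd = 0 := fun i =>
    smul_eq_zero_iff.1 <| (inl_mul_eq_smul _ z).symm.trans (hz _ (inl_X_mem_mIdeal k i))
  refine TrivSqZeroExt.ext ?_ ?_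
  · exact (mul_eq_zero.1 (hX 0).1).resolve_left (MvPolynomial.X_ne_zero 0)
  · exact eq_zero_of_smul_eq_zero_of_isRelPrime (MvPolynomial.isRelPrime_X_X (by decide))
      (MvPolynomial.X_ne_zero 0) (hX 0).2 (hX 1).2
end

section
/- Let R be a commutative ring and I a finitely generated ideal with pd_R(R/I) ≤ d (finite projective dimension at most d, witnessed by a resolution by finitely generated projectives). If Ext_R^i(R/I, R) = 0 for all i = 0,…,d, then I = R. -/
universe u

open CategoryTheory Opposite

/-!
If `M` has a resolution `0 → P_k → ⋯ → P_0 → M → 0` by finitely generated projectives and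
`Ext^i(M, R) = 0` for `1 ≤ i ≤ k`, then `M` is finitely generated projective. Indeed, with
`K = ker(P_0 → M)`, dimension shifting (on a resolution of `K` spliced onto `P_0`) gives
`Ext^i(K, R) ≅ Ext^(i+1)(M, R) = 0` for `i ≥ 1`, so `K` is finitely generated projective by
induction. Then `Ext^1(M, R) = 0` says that every functional on `K` extends to `P_0`; as `K` is a
direct summand of some `R^n`, the identity of `K` extends as well, so `0 → K → P_0 → M → 0` splits
and `M` is projective.

For `M = R/I` this makes `R/I` projective with `Hom(R/I, R) = Ext^0(R/I, R) = 0`, and a projective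
module is separated by its functionals, so `R/I = 0`.
-/

open Limits

namespace CategoryTheory

lemma ShortComplex.Exact.precomp_f_of_epi {C : Type*} [Category* C] [Abelian C]
    {S : ShortComplex C} (hS : S.Exact) {W : C} (p : W ⟶ S.X₁) [Epi p] :
    (ShortComplex.mk (p ≫ S.f) S.g (by simp)).Exact :=
  (ShortComplex.exact_iff_of_epi_of_isIso_of_mono
    ({ τ₁ := p, τ₂ := 𝟙 _, τ₃ := 𝟙 _ } : ShortComplex.mk (p ≫ S.f) S.g (by simp) ⟶ S)).2 hS

namespace ProjectiveResolution

variable {C : Type*} [Category* C] [Abelian C]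

section

variable {Z : C} (Q : ProjectiveResolution Z)

noncomputable def augmentation : Q.complex.X 0 ⟶ Z := (Q.complex.toSingle₀Equiv Z Q.π).1

instance : Epi Q.augmentation := inferInstanceAs (Epi (Q.π.f 0))

@[simp]
lemma d_comp_augmentation : Q.complex.d 1 0 ≫ Q.augmentation = 0 :=
  (Q.complex.toSingle₀Equiv Z Q.π).2

@[simp]
lemma d_comp_augmentation_assoc {Y : C} (g : Z ⟶ Y) :
    Q.complex.d 1 0 ≫ Q.augmentation ≫ g = 0 := by
  rw [← Category.assoc, d_comp_augmentation, zero_comp]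

lemma exact_d_augmentation_comp {Y : C} (i : Z ⟶ Y) [Mono i] :
    (ShortComplex.mk (Q.complex.d 1 0) (Q.augmentation ≫ i) (by simp)).Exact :=
  (ShortComplex.exact_iff_of_epi_of_isIso_of_mono
    ({ τ₁ := 𝟙 _, τ₂ := 𝟙 _, τ₃ := i } : ShortComplex.mk _ _ Q.d_comp_augmentation ⟶
      ShortComplex.mk (Q.complex.d 1 0) (Q.augmentation ≫ i) (by simp))).1 Q.exact₀

end

variable {S : ShortComplex C} (Q : ProjectiveResolution S.X₁)

/-- The complex `⋯ → Q₁ → Q₀ → S.X₂`, where `Q₀ → S.X₂` factors through `S.f`. -/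
noncomputable def spliceComplex : ChainComplex C ℕ :=
  Q.complex.augment (Q.augmentation ≫ S.f) (by simp)

noncomputable def spliceπ : Q.spliceComplex ⟶ (ChainComplex.single₀ C).obj S.X₃ :=
  (ChainComplex.toSingle₀Equiv _ _).symm ⟨S.g,
    (Category.assoc _ _ _).trans ((Q.augmentation ≫= S.zero).trans comp_zero)⟩

lemma spliceπ_f_zero : Q.spliceπ.f 0 = S.g :=
  ChainComplex.toSingle₀Equiv_symm_apply_f_zero _ _

variable (hS : S.ShortExact) [Projective S.X₂]

noncomputable def splice : ProjectiveResolution S.X₃ where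
  complex := Q.spliceComplex
  projective
    | 0 => ‹Projective S.X₂›
    | n + 1 => Q.projective n
  π := Q.spliceπ
  quasiIso := ⟨fun n => by
    cases n with
    | zero =>
      rw [ChainComplex.quasiIsoAt₀_iff, ShortComplex.quasiIso_iff_of_zeros']
      · dsimp only [HomologicalComplex.shortComplexFunctor']
        refine (ShortComplex.exact_and_epi_g_iff_of_iso ?_).2
          ⟨hS.exact.precomp_f_of_epi Q.augmentation, hS.epi_g⟩
        exact ShortComplex.isoMk (Iso.refl _) (Iso.refl _) (Iso.refl _)
          (by simp [spliceComplex])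
          ((Category.id_comp _).trans (Q.spliceπ_f_zero.symm.trans (Category.comp_id _).symm))
      all_goals rfl
    | succ n =>
      rw [quasiIsoAt_iff_exactAt' _ _ (ChainComplex.exactAt_succ_single_obj _ _),
        HomologicalComplex.exactAt_iff' _ (n + 2) (n + 1) n (by simp) (by simp)]
      cases n with
      | zero =>
        have := hS.mono_f
        exact Q.exact_d_augmentation_comp S.f
      | succ n => exact Q.exact_succ n⟩

-- In degrees `≥ 1` the spliced complex is `Q.complex` shifted by one, definitionally.
lemma exactAt_linearYonedaObj_splice_iff (R : Type*) [Ring R] [Linear R C] (Y : C) (n : ℕ) :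
    ((Q.splice hS).complex.linearYonedaObj R Y).ExactAt (n + 2) ↔
      (Q.complex.linearYonedaObj R Y).ExactAt (n + 1) := by
  rw [HomologicalComplex.exactAt_iff' _ (n + 1) (n + 2) (n + 3) (by simp) (by simp),
    HomologicalComplex.exactAt_iff' _ n (n + 1) (n + 2) (by simp) (by simp)]
  rfl

variable (R : Type*) [Ring R] [Linear R C] [EnoughProjectives C]

lemma subsingleton_ext_iff_exactAt {X : C} (P : ProjectiveResolution X) (Y : C) (n : ℕ) :
    Subsingleton (((Ext R C n).obj (op X)).obj Y) ↔ (P.complex.linearYonedaObj R Y).ExactAt n := by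
  rw [HomologicalComplex.exactAt_iff_isZero_homology, ← (P.isoExt n Y).isZero_iff,
    ModuleCat.isZero_iff_subsingleton]

end ProjectiveResolution

variable (R : Type*) [Ring R] {C : Type*} [Category* C] [Abelian C] [Linear R C]
  [EnoughProjectives C]

lemma eq_zero_of_subsingleton_ext_zero {X Y : C}
    (h : Subsingleton (((Ext R C 0).obj (op X)).obj Y)) (g : X ⟶ Y) : g = 0 := by
  let P := ProjectiveResolution.of X
  rw [P.subsingleton_ext_iff_exactAt R,
    HomologicalComplex.exactAt_iff' _ 0 0 1 (by simp) (by simp)] at h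
  have hinj := (ModuleCat.mono_iff_injective _).1
    (h.mono_g ((P.complex.linearYonedaObj R Y).shape 0 0 (by simp)))
  have : P.augmentation ≫ g = 0 :=
    hinj (a₂ := 0) ((P.d_comp_augmentation_assoc g).trans (map_zero _).symm)
  exact (cancel_epi P.augmentation).1 (this.trans comp_zero.symm)

variable {S : ShortComplex C} [Projective S.X₂]

lemma exists_comp_eq_of_subsingleton_ext_one (hS : S.ShortExact) {Y : C}
    (h : Subsingleton (((Ext R C 1).obj (op S.X₃)).obj Y)) (φ : S.X₁ ⟶ Y) :
    ∃ e : S.X₂ ⟶ Y, S.f ≫ e = φ := by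
  let Q := ProjectiveResolution.of S.X₁
  rw [(Q.splice hS).subsingleton_ext_iff_exactAt R, HomologicalComplex.exactAt_iff' _ 0 1 2
    (by simp) (by simp), ShortComplex.moduleCat_exact_iff] at h
  obtain ⟨e, he⟩ := h (Q.augmentation ≫ φ) (Q.d_comp_augmentation_assoc φ)
  exact ⟨e, (cancel_epi Q.augmentation).1 ((Category.assoc _ _ _).symm.trans he)⟩

lemma subsingleton_ext_succ_succ_iff (hS : S.ShortExact) (Y : C) (n : ℕ) :
    Subsingleton (((Ext R C (n + 2)).obj (op S.X₃)).obj Y) ↔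
      Subsingleton (((Ext R C (n + 1)).obj (op S.X₁)).obj Y) := by
  let Q := ProjectiveResolution.of S.X₁
  rw [(Q.splice hS).subsingleton_ext_iff_exactAt R, Q.subsingleton_ext_iff_exactAt R]
  exact Q.exactAt_linearYonedaObj_splice_iff hS R Y n

end CategoryTheory
section Module

variable {R : Type*} [CommRing R] {K P M : Type*} [AddCommGroup K] [Module R K]
  [AddCommGroup P] [Module R P] [AddCommGroup M] [Module R M]

theorem Module.exists_retraction_of_forall_dual_extends [Module.Finite R K]
    [Module.Projective R K] (i : K →ₗ[R] P)
    (h : ∀ φ : Module.Dual R K, ∃ ψ : Module.Dual R P, ψ ∘ₗ i = φ) :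
    ∃ r : P →ₗ[R] K, r ∘ₗ i = LinearMap.id := by
  obtain ⟨n, π, hπ⟩ := Module.Finite.exists_fin' R K
  obtain ⟨s, hs⟩ := Module.projective_lifting_property π LinearMap.id hπ
  choose ψ hψ using fun j : Fin n => h (LinearMap.proj j ∘ₗ s)
  have hψs : LinearMap.pi ψ ∘ₗ i = s := by
    ext x j
    exact LinearMap.congr_fun (hψ j) x
  exact ⟨π ∘ₗ LinearMap.pi ψ, by rw [LinearMap.comp_assoc, hψs, hs]⟩

theorem Module.Projective.of_exact_of_forall_dual_extends [Module.Projective R P]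
    [Module.Finite R K] [Module.Projective R K] {i : K →ₗ[R] P} {f : P →ₗ[R] M}
    (hexact : Function.Exact i f) (hf : Function.Surjective f)
    (h : ∀ φ : Module.Dual R K, ∃ ψ : Module.Dual R P, ψ ∘ₗ i = φ) :
    Module.Projective R M := by
  obtain ⟨r, hr⟩ := Module.exists_retraction_of_forall_dual_extends i h
  have splits := hexact.split_tfae'.out 1 0
  obtain ⟨-, s, hs⟩ := splits.1 ⟨hf, r, hr⟩
  exact Module.Projective.of_split s f hs

theorem Module.subsingleton_of_forall_dual_eq_zero [Module.Projective R M]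
    (h : ∀ φ : Module.Dual R M, φ = 0) : Subsingleton M :=
  ⟨fun a b => by
    rw [← sub_eq_zero, ← Module.forall_dual_apply_eq_zero_iff R]
    simp [h]⟩

end Module

theorem HasFGProjRes.finite_and_projective_of_subsingleton_ext {R : Type u} [CommRing R] {k : ℕ}
    {M : Type u} [AddCommGroup M] [Module R M] (hres : HasFGProjRes R k M)
    (hext : ∀ i, 1 ≤ i → i ≤ k → Subsingleton (extMod R M R i)) :
    Module.Finite R M ∧ Module.Projective R M := by
  induction k generalizing M with
  | zero => exact hres
  | succ k ih =>
    obtain ⟨P, _, _, f, _, _, hf, hker⟩ := hres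
    have hS := LinearMap.shortExact_shortComplexKer hf
    have : Projective (ModuleCat.of R P) := (IsProjective.iff_projective P).1 ‹_›
    obtain ⟨_, _⟩ := ih hker fun i hi₁ hik => by
      obtain ⟨j, rfl⟩ := Nat.exists_eq_add_of_le' hi₁
      exact (subsingleton_ext_succ_succ_iff R hS _ j).1 (hext (j + 2) (by omega) (by omega))
    have hdual (φ : Module.Dual R (LinearMap.ker f)) : ∃ ψ : Module.Dual R P,
        ψ ∘ₗ (LinearMap.ker f).subtype = φ := by
      obtain ⟨e, he⟩ := exists_comp_eq_of_subsingleton_ext_one R hS (hext 1 le_rfl (by omega))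
        (ModuleCat.ofHom φ)
      exact ⟨e.hom, congrArg ModuleCat.Hom.hom he⟩
    exact ⟨Module.Finite.of_surjective f hf,
      .of_exact_of_forall_dual_extends (LinearMap.exact_subtype_ker_map f) hf hdual⟩

theorem ideal_eq_top_of_fgProjRes_of_ext_vanishing_general (R : Type u) [CommRing R] (d : ℕ)
    (I : Ideal R) (hres : ∃ k ≤ d, HasFGProjRes R k (R ⧸ I))
    (hext : ∀ i ≤ d, Subsingleton (extMod R (R ⧸ I) R i)) :
    I = ⊤ := by
  obtain ⟨k, hk, hres⟩ := hres
  have hproj : Module.Projective R (R ⧸ I) :=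
    (hres.finite_and_projective_of_subsingleton_ext fun i _ hi => hext i (hi.trans hk)).2
  rw [← Ideal.Quotient.subsingleton_iff]
  refine Module.subsingleton_of_forall_dual_eq_zero (R := R) fun φ => ?_
  exact congrArg ModuleCat.Hom.hom
    (eq_zero_of_subsingleton_ext_zero R (hext 0 d.zero_le) (ModuleCat.ofHom φ))

/-- If `I` is a finitely generated ideal such that `R/I` has projective dimension at most `d`,
witnessed by a resolution by finitely generated projectives, and `Ext_R^i(R/I, R) = 0` for
`i = 0, …, d`, then `I = R`. -/
theorem ideal_eq_top_of_fgProjRes_of_ext_vanishing (R : Type u) [CommRing R] (d : ℕ)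
    (I : Ideal R) (hI : I.FG) (hres : ∃ k ≤ d, HasFGProjRes R k (R ⧸ I))
    (hext : ∀ i ≤ d, Subsingleton (extMod R (R ⧸ I) R i)) :
    I = ⊤ :=
  ideal_eq_top_of_fgProjRes_of_ext_vanishing_general R d I hres hext
end
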